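/- If W_n/n converges almost surely to c₀ = 2uv ∫ p_X(s)p_Y(s)/(u p_X(s) + v p_Y(s)) ds under the configuration of densities, then c₀ ≤ 2uv, with equality if and only if p_X = p_Y almost everywhere; hence the limit of the normalized cut-edge count strictly separates H0 from H1. -/
import Mathlib


open MeasureTheory

lemma ptwise_aux (u v x y : ℝ) (hu : 0 < u) (hv : 0 < v) (huv : u + v = 1)
    (hx : 0 ≤ x) (hy : 0 ≤ y) :
    (if u * x + v * y = 0 then 0 else x * y / (u * x + v * y)) ≤ v * x + u * y ∧
    ((if u * x + v * y = 0 then 0 else x * y / (u * x + v * y)) = v * x + u * y ↔ x = y) := by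
  by_cases hd : u * x + v * y = 0
  · have hx0 : x = 0 := by nlinarith [mul_nonneg hu.le hx, mul_nonneg hv.le hy]
    have hy0 : y = 0 := by nlinarith [mul_nonneg hu.le hx, mul_nonneg hv.le hy]
    simp [hd, hx0, hy0]
  · have hdpos : 0 < u * x + v * y :=
      lt_of_le_of_ne (by positivity) (Ne.symm hd)
    rw [if_neg hd]
    have key : (v * x + u * y) * (u * x + v * y) = x * y + u * v * (x - y) ^ 2 := by
      have hv' : v = 1 - u := by linarith
      subst hv'; ring
    constructor
    · rw [div_le_iff₀ hdpos]
      nlinarith [mul_nonneg (mul_pos hu hv).le (sq_nonneg (x - y))]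
    · rw [div_eq_iff hd]
      constructor
      · intro h
        have hk : u * v * (x - y) ^ 2 = 0 := by linarith
        have : (x - y) ^ 2 = 0 := by
          have huv' : u * v ≠ 0 := by positivity
          exact (mul_eq_zero.mp hk).resolve_left huv'
        have := pow_eq_zero_iff (n := 2) (by norm_num) |>.mp this
        linarith
      · intro h; subst h; linarith [key]

/-- The almost-sure limit `c₀ = 2uv ∫ p_X p_Y/(u p_X + v p_Y)` of the normalized
cut-edge count satisfies `c₀ ≤ 2uv`, with equality iff `p_X = p_Y` almost everywhere;
hence the limit strictly separates `H0` from `H1`. -/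
theorem cut_edge_limit_separates
    {X : Type*} [MeasurableSpace X] (ν : Measure X) [SigmaFinite ν]
    (pX pY : X → ℝ) (hXmeas : Measurable pX) (hYmeas : Measurable pY)
    (hXnn : ∀ s, 0 ≤ pX s) (hYnn : ∀ s, 0 ≤ pY s)
    (hXdens : ∫ s, pX s ∂ν = 1) (hYdens : ∫ s, pY s ∂ν = 1)
    (u v : ℝ) (hu : 0 < u) (hv : 0 < v) (huv : u + v = 1)
    (f : X → ℝ)
    (hf : f = fun s => if u * pX s + v * pY s = 0 then 0
            else pX s * pY s / (u * pX s + v * pY s))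
    (hfint : Integrable f ν)
    (c₀ : ℝ) (hc₀ : c₀ = 2 * u * v * ∫ s, f s ∂ν) :
    c₀ ≤ 2 * u * v ∧ (c₀ = 2 * u * v ↔ ∀ᵐ s ∂ν, pX s = pY s) := by
  have hXint : Integrable pX ν := by
    by_contra h
    rw [integral_undef h] at hXdens
    norm_num at hXdens
  have hYint : Integrable pY ν := by
    by_contra h
    rw [integral_undef h] at hYdens
    norm_num at hYdens
  set g : X → ℝ := fun s => v * pX s + u * pY s with hg
  have hgint : Integrable g ν := ((hXint.const_mul v).add (hYint.const_mul u))
  have hgval : ∫ s, g s ∂ν = 1 := by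
    rw [hg]
    rw [integral_add (hXint.const_mul v) (hYint.const_mul u),
      integral_const_mul, integral_const_mul, hXdens, hYdens]
    linarith
  have hle : ∀ s, f s ≤ g s := by
    intro s
    rw [hf]
    exact (ptwise_aux u v (pX s) (pY s) hu hv huv (hXnn s) (hYnn s)).1
  have heq : ∀ s, f s = g s ↔ pX s = pY s := by
    intro s
    rw [hf]
    exact (ptwise_aux u v (pX s) (pY s) hu hv huv (hXnn s) (hYnn s)).2
  have hintle : ∫ s, f s ∂ν ≤ 1 := by
    rw [← hgval]
    exact integral_mono hfint hgint hle
  have h2uv : (0:ℝ) < 2 * u * v := by positivity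
  constructor
  · rw [hc₀]
    calc 2 * u * v * ∫ s, f s ∂ν ≤ 2 * u * v * 1 := by
          exact mul_le_mul_of_nonneg_left hintle h2uv.le
      _ = 2 * u * v := by ring
  · rw [hc₀]
    have hiff : 2 * u * v * ∫ s, f s ∂ν = 2 * u * v ↔ ∫ s, f s ∂ν = 1 := by
      constructor
      · intro h
        have := mul_left_cancel₀ h2uv.ne' (by linarith [h] : 2 * u * v * ∫ s, f s ∂ν = 2 * u * v * 1)
        linarith
      · intro h; rw [h]; ring
    rw [hiff]
    constructor
    · intro h
      have hzero : ∫ s, (g s - f s) ∂ν = 0 := by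
        rw [integral_sub hgint hfint, hgval, h]; ring
      have hnn : 0 ≤ᵐ[ν] fun s => g s - f s :=
        Filter.Eventually.of_forall fun s => sub_nonneg.mpr (hle s)
      have := (integral_eq_zero_iff_of_nonneg_ae hnn (hgint.sub hfint)).mp hzero
      filter_upwards [this.le] with s hs
      have : f s = g s := by
        have := hle s
        simp only [Pi.zero_apply] at hs
        linarith [hs]
      exact (heq s).mp this
    · intro h
      have hfeq : f =ᵐ[ν] g := by
        filter_upwards [h] with s hs
        exact (heq s).mpr hs
      rw [integral_congr_ae hfeq, hgval]
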